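/- Each of the rewriting moves (replace factor ρμ by μρ; replace prefix w₀ρλw₁λμ by w₀λρw₁μλ; replace prefix w₀λρw₁λμ by w₀ρλw₁μλ, where D_{ρ,λ}(w₀)=1 and w₁ ∈ L_{1,∞}) sends a word in L_{2,∞} to another word in L_{2,∞}. -/

import Mathlib

inductive Letter | rho | lam | mu
deriving DecidableEq

open Letter

def Dc (a b : Letter) (u : List Letter) : ℤ :=
  (u.count a : ℤ) - (u.count b : ℤ)

def Linf (k : ℕ) (w : List Letter) : Prop :=
  (∀ u : List Letter, u <+: w → 0 ≤ Dc rho lam u ∧ Dc rho lam u ≤ (k : ℤ) ∧ 0 ≤ Dc lam mu u) ∧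
  Dc rho lam w = 0 ∧ Dc lam mu w = 0

inductive Step : List Letter → List Letter → Prop
  | rhomu (a b : List Letter) :
      Step (a ++ [rho, mu] ++ b) (a ++ [mu, rho] ++ b)
  | move2 (w₀ w₁ rest : List Letter) (h₀ : Dc rho lam w₀ = 1) (h₁ : Linf 1 w₁) :
      Step (w₀ ++ [rho, lam] ++ w₁ ++ [lam, mu] ++ rest)
           (w₀ ++ [lam, rho] ++ w₁ ++ [mu, lam] ++ rest)
  | move3 (w₀ w₁ rest : List Letter) (h₀ : Dc rho lam w₀ = 1) (h₁ : Linf 1 w₁) :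
      Step (w₀ ++ [lam, rho] ++ w₁ ++ [lam, mu] ++ rest)
           (w₀ ++ [rho, lam] ++ w₁ ++ [mu, lam] ++ rest)

/-! Each move rearranges the letters of a segment `x` of the word into a permutation `x'`, so
the statistics of the whole word and of every prefix not ending strictly inside `x'` are
unchanged, and only prefixes ending inside `x'` need checking. For the two long moves,
`D_{ρ,λ}(w₀) = 1` leaves room for either letter of the swapped pair `ρλ`, and the prefixes of
`w₁ ∈ L_{1,∞}`, lifted by one, stay within `[1, 2]`. -/

namespace List

variable {α : Type*} {P : List α → Prop}

theorem forall_prefix_append_iff {a b : List α} :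
    (∀ u, u <+: a ++ b → P u) ↔ (∀ u, u <+: a → P u) ∧ ∀ v, v <+: b → P (a ++ v) := by
  refine ⟨fun h => ⟨fun u hu => h u (prefix_append_of_prefix hu),
    fun v hv => h _ ((prefix_append_right_inj a).mpr hv)⟩, fun ⟨ha, hb⟩ u hu => ?_⟩
  rcases prefix_or_prefix_of_prefix hu (prefix_append a b) with hua | ⟨v, rfl⟩
  · exact ha u hua
  · exact hb v ((prefix_append_right_inj a).mp hu)

theorem forall_prefix_cons_iff {c : α} {l : List α} :
    (∀ u, u <+: c :: l → P u) ↔ P [] ∧ ∀ v, v <+: l → P (c :: v) := by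
  refine ⟨fun h => ⟨h [] nil_prefix, fun v hv => h _ (cons_prefix_cons.mpr ⟨rfl, hv⟩)⟩,
    fun ⟨h0, h1⟩ u hu => ?_⟩
  rcases prefix_cons_iff.mp hu with rfl | ⟨t, rfl, ht⟩
  exacts [h0, h1 t ht]

end List

theorem Dc_append (a b : Letter) (u v : List Letter) :
    Dc a b (u ++ v) = Dc a b u + Dc a b v := by
  simp only [Dc, List.count_append]
  push_cast
  ring

theorem Dc_nil (a b : Letter) : Dc a b [] = 0 := rfl

theorem Dc_cons (a b c : Letter) (l : List Letter) :
    Dc a b (c :: l) = ((if c = a then 1 else 0) - if c = b then 1 else 0) + Dc a b l := by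
  simp only [Dc, List.count_cons, beq_iff_eq]
  split_ifs <;> push_cast <;> ring

theorem List.Perm.Dc_eq {l l' : List Letter} (h : l.Perm l') (a b : Letter) :
    Dc a b l = Dc a b l' := by
  simp only [Dc, h.count_eq]

def Admissible (k : ℕ) (u : List Letter) : Prop :=
  0 ≤ Dc rho lam u ∧ Dc rho lam u ≤ (k : ℤ) ∧ 0 ≤ Dc lam mu u

theorem linf_iff_admissible {k : ℕ} {w : List Letter} :
    Linf k w ↔ (∀ u, u <+: w → Admissible k u) ∧ Dc rho lam w = 0 ∧ Dc lam mu w = 0 :=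
  Iff.rfl

theorem Linf.of_perm_segment {k : ℕ} {a x x' b : List Letter} (hw : Linf k (a ++ x ++ b))
    (hx : x.Perm x') (hx' : ∀ v, v <+: x' → Admissible k (a ++ v)) :
    Linf k (a ++ x' ++ b) := by
  have hD (s : List Letter) (c d : Letter) : Dc c d (a ++ x' ++ s) = Dc c d (a ++ x ++ s) :=
    (((hx.append_left a).append_right s).Dc_eq c d).symm
  rw [linf_iff_admissible] at hw ⊢
  obtain ⟨hpre, hrl, hlm⟩ := hw
  simp only [List.forall_prefix_append_iff] at hpre ⊢
  refine ⟨⟨⟨hpre.1.1, hx'⟩, fun s hs => ?_⟩, hD b _ _ ▸ hrl, hD b _ _ ▸ hlm⟩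
  simpa only [Admissible, hD] using hpre.2 s hs

theorem Linf.move {p p' w₀ w₁ rest : List Letter}
    (hw : Linf 2 (w₀ ++ p ++ w₁ ++ [lam, mu] ++ rest)) (hp : p.Perm p')
    (hp' : p' = [lam, rho] ∨ p' = [rho, lam]) (h₀ : Dc rho lam w₀ = 1) (h₁ : Linf 1 w₁) :
    Linf 2 (w₀ ++ p' ++ w₁ ++ [mu, lam] ++ rest) := by
  have hw₀ : 0 ≤ Dc lam mu w₀ := (hw.1 w₀ (by simp [List.append_assoc])).2.2
  replace hw : Linf 2 (w₀ ++ (p ++ w₁ ++ [lam, mu]) ++ rest) := by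
    simpa only [List.append_assoc] using hw
  have hseg : ∀ v, v <+: p' ++ w₁ ++ [mu, lam] → Admissible 2 (w₀ ++ v) := by
    obtain ⟨hpre, hrl, hlm⟩ := h₁
    rcases hp' with rfl | rfl
    all_goals
      simp only [List.forall_prefix_append_iff, List.forall_prefix_cons_iff, List.prefix_nil,
        forall_eq, List.cons_append, List.nil_append, Admissible, Dc_append, Dc_cons, Dc_nil,
        reduceCtorEq, ↓reduceIte]
      refine ⟨by omega, by omega, fun u hu => ?_, by omega⟩
      obtain ⟨_, _, _⟩ := hpre u hu
      omega
  simpa only [List.append_assoc] using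
    hw.of_perm_segment ((hp.append_right _).append (.swap mu lam [])) hseg

theorem Linf.swap_rho_mu {k : ℕ} {a b : List Letter} (hw : Linf k (a ++ [rho, mu] ++ b)) :
    Linf k (a ++ [mu, rho] ++ b) := by
  refine hw.of_perm_segment (.swap mu rho []) ?_
  have ha := hw.1 a (by simp [List.append_assoc])
  have ha' := hw.1 (a ++ [rho, mu]) (by simp)
  simp only [List.forall_prefix_cons_iff, List.prefix_nil, forall_eq, Admissible, Dc_append,
    Dc_cons, Dc_nil, reduceCtorEq, ↓reduceIte] at ha ha' ⊢
  omega

theorem stmt15 (w w' : List Letter) (hs : Step w w') (hw : Linf 2 w) :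
    Linf 2 w' := by
  cases hs with
  | rhomu a b => exact hw.swap_rho_mu
  | move2 w₀ w₁ rest h₀ h₁ => exact hw.move (.swap lam rho []) (.inl rfl) h₀ h₁
  | move3 w₀ w₁ rest h₀ h₁ => exact hw.move (.swap rho lam []) (.inr rfl) h₀ h₁
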